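/- arXiv:1903.06981 — 4 statements merged into one kernel-verified Lean document; each statement's English description precedes it below -/
import Mathlib

section
/- For token swapping on a star with n vertices (center plus n-1 leaves), the minimum number of swaps equals n_U + ℓ, where n_U is the number of leaves whose initial token is not its destination token, and ℓ is the number of cycles of the token permutation that have length at least 2 and do not contain the center vertex. -/
/-- On a star with center `0` and leaves the nonzero elements of `Fin (n+1)`,
every edge is incident to the center, so a swap is specified by a leaf `v`:
it exchanges the token on the center with the token on `v`.
`π v` is the token currently on vertex `v`; sorted means `π = 1`. -/
def applyStarSwaps (n : ℕ) (π : Equiv.Perm (Fin (n + 1))) (s : List (Fin (n + 1))) :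
    Equiv.Perm (Fin (n + 1)) :=
  s.foldl (fun σ v => σ * Equiv.swap 0 v) π

/-!
A swap at the leaf `b` only changes the tokens on the center `a` and on `b`, so the potential
"unhappy leaves plus cycles avoiding the center" changes only through the contribution of `b`:
one for `b` being unhappy, one more if the cycle of `b` avoids the center. That contribution drops
by at most one under the swap, which gives the lower bound. Conversely, an unsorted placement
always has a swap lowering the potential by one: if the center holds its own token, swap it into
any unhappy leaf (merging that leaf's cycle with the center); otherwise send the center's token
home.
-/

open Finset

namespace Equiv.Perm

variable {α : Type*}

theorem sameCycle_of_apply_eq {σ : Perm α} {x y : α} (h : σ x = y) : σ.SameCycle x y :=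
  h ▸ sameCycle_apply_right.2 SameCycle.rfl

variable [Fintype α] [DecidableEq α]

def starPotential (a : α) (σ : Perm α) : ℕ :=
  #(σ.support.erase a) + #(σ.cycleFactorsFinset.filter fun c => c a = a)

def leafDefect (a b : α) (σ : Perm α) : ℕ :=
  (if b ∈ σ.support then 1 else 0) + if b ∈ σ.support ∧ σ.cycleOf b a = a then 1 else 0

theorem filter_cycleFactorsFinset_apply_fixed_and_ne (σ : Perm α) (a b : α) :
    (σ.cycleFactorsFinset.filter fun c => c a = a ∧ c b ≠ b) =
      if b ∈ σ.support ∧ σ.cycleOf b a = a then {σ.cycleOf b} else ∅ := by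
  ext c
  simp only [mem_filter]
  constructor
  · rintro ⟨hc, ha, hb⟩
    obtain rfl := cycle_is_cycleOf (mem_support.2 hb) hc
    have hσb : σ b ≠ b := by rwa [cycleOf_apply_self] at hb
    rw [if_pos ⟨mem_support.2 hσb, ha⟩, mem_singleton]
  · split_ifs with h
    · rintro hc
      obtain rfl := mem_singleton.1 hc
      refine ⟨cycleOf_mem_cycleFactorsFinset_iff.2 h.1, h.2, ?_⟩
      rw [cycleOf_apply_self]
      exact mem_support.1 h.1
    · simp

theorem card_filter_cycleFactorsFinset_apply_fixed (σ : Perm α) (a b : α) :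
    #(σ.cycleFactorsFinset.filter fun c => c a = a) =
      #(σ.cycleFactorsFinset.filter fun c => c a = a ∧ c b = b) +
        if b ∈ σ.support ∧ σ.cycleOf b a = a then 1 else 0 := by
  rw [← filter_filter, ← card_filter_add_card_filter_not (p := fun c : Perm α => c b = b),
    filter_filter, filter_filter, filter_cycleFactorsFinset_apply_fixed_and_ne]
  split_ifs <;> simp

theorem mem_cycleFactorsFinset_mul_swap {σ c : Perm α} {a b : α}
    (hc : c ∈ σ.cycleFactorsFinset) (ha : c a = a) (hb : c b = b) :
    c ∈ (σ * swap a b).cycleFactorsFinset := by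
  rw [mem_cycleFactorsFinset_iff] at hc ⊢
  refine ⟨hc.1, fun x hx => ?_⟩
  have hxa : x ≠ a := by rintro rfl; exact mem_support.1 hx ha
  have hxb : x ≠ b := by rintro rfl; exact mem_support.1 hx hb
  rw [mul_apply, swap_apply_of_ne_of_ne hxa hxb, hc.2 x hx]

theorem filter_cycleFactorsFinset_mul_swap (σ : Perm α) (a b : α) :
    ((σ * swap a b).cycleFactorsFinset.filter fun c => c a = a ∧ c b = b) =
      σ.cycleFactorsFinset.filter fun c => c a = a ∧ c b = b := by
  ext c
  simp only [mem_filter]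
  refine ⟨fun ⟨hc, ha, hb⟩ => ⟨?_, ha, hb⟩, fun ⟨hc, ha, hb⟩ =>
    ⟨mem_cycleFactorsFinset_mul_swap hc ha hb, ha, hb⟩⟩
  simpa [mul_assoc] using mem_cycleFactorsFinset_mul_swap hc ha hb

theorem erase_erase_support_mul_swap (σ : Perm α) (a b : α) :
    ((σ * swap a b).support.erase a).erase b = (σ.support.erase a).erase b := by
  ext x
  simp +contextual [swap_apply_of_ne_of_ne]

theorem starPotential_eq_add_leafDefect (σ : Perm α) {a b : α} (hb : b ≠ a) :
    starPotential a σ = #((σ.support.erase a).erase b) +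
      #(σ.cycleFactorsFinset.filter fun c => c a = a ∧ c b = b) + leafDefect a b σ := by
  have hsupp : #(σ.support.erase a) = #((σ.support.erase a).erase b) +
      if b ∈ σ.support then 1 else 0 := by
    split_ifs with h
    · exact (card_erase_add_one (mem_erase.2 ⟨hb, h⟩)).symm
    · rw [erase_eq_of_notMem fun h' => h (mem_of_mem_erase h'), add_zero]
  rw [starPotential, leafDefect, hsupp, card_filter_cycleFactorsFinset_apply_fixed σ a b]
  ring

theorem starPotential_add_leafDefect_mul_swap (σ : Perm α) {a b : α} (hb : b ≠ a) :
    starPotential a σ + leafDefect a b (σ * swap a b) =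
      starPotential a (σ * swap a b) + leafDefect a b σ := by
  rw [starPotential_eq_add_leafDefect σ hb, starPotential_eq_add_leafDefect _ hb,
    erase_erase_support_mul_swap, filter_cycleFactorsFinset_mul_swap]
  ring

theorem leafDefect_le_leafDefect_mul_swap_add_one (σ : Perm α) {a b : α} (hb : b ≠ a) :
    leafDefect a b σ ≤ leafDefect a b (σ * swap a b) + 1 := by
  have key : b ∈ σ.support → σ.cycleOf b a = a → b ∈ (σ * swap a b).support := by
    intro _ hcyc
    rw [mem_support, mul_apply, swap_apply_right]
    intro hab
    rw [(sameCycle_of_apply_eq hab).symm.cycleOf_apply, hab] at hcyc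
    exact hb hcyc
  unfold leafDefect
  split_ifs <;> grind

theorem exists_leafDefect_mul_swap_add_one (a : α) {σ : Perm α} (hσ : σ ≠ 1) :
    ∃ b ≠ a, leafDefect a b (σ * swap a b) + 1 = leafDefect a b σ := by
  by_cases ha : σ a = a
  · obtain ⟨b, hb⟩ : ∃ b, σ b ≠ b := by
      by_contra! h
      exact hσ (Equiv.ext h)
    have hba : b ≠ a := by rintro rfl; exact hb ha
    have hσ'b : (σ * swap a b) b = a := by rw [mul_apply, swap_apply_right, ha]
    have hcyc : (σ * swap a b).cycleOf b a = σ b := by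
      rw [(sameCycle_of_apply_eq hσ'b).cycleOf_apply, mul_apply, swap_apply_left]
    have hσb : σ b ≠ a := fun h => hba (σ.injective (h.trans ha.symm))
    have hcyc₀ : σ.cycleOf b a = a := by
      rw [cycleOf_apply]
      split_ifs <;> [exact ha; rfl]
    refine ⟨b, hba, ?_⟩
    simp [leafDefect, hσ'b, hcyc, hb, hba.symm, hσb, hcyc₀]
  · refine ⟨σ a, ha, ?_⟩
    have hσ'b : (σ * swap a (σ a)) (σ a) = σ a := by rw [mul_apply, swap_apply_right]
    have hb : σ (σ a) ≠ σ a := fun h => ha (σ.injective h)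
    simp [leafDefect, hσ'b, hb, ha]

theorem starPotential_one (a : α) : starPotential a (1 : Perm α) = 0 := by
  simp [starPotential]

theorem starPotential_le_length {a : α} {σ : Perm α} {s : List α} (hs : ∀ v ∈ s, v ≠ a)
    (hsort : s.foldl (fun τ v => τ * swap a v) σ = 1) : starPotential a σ ≤ s.length := by
  induction s generalizing σ with
  | nil =>
    obtain rfl : σ = 1 := hsort
    exact (starPotential_one a).le
  | cons b s ih =>
    have hb : b ≠ a := hs b List.mem_cons_self
    have hrest := ih (σ := σ * swap a b) (fun v hv => hs v (List.mem_cons_of_mem b hv)) hsort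
    have hstep := leafDefect_le_leafDefect_mul_swap_add_one σ hb
    have hcons := starPotential_add_leafDefect_mul_swap σ hb
    simp only [List.length_cons]
    omega

theorem exists_foldl_mul_swap_eq_one (a : α) (σ : Perm α) :
    ∃ s : List α, (∀ v ∈ s, v ≠ a) ∧ s.foldl (fun τ v => τ * swap a v) σ = 1 ∧
      s.length = starPotential a σ := by
  induction hk : starPotential a σ using Nat.strong_induction_on generalizing σ with
  | _ k ih =>
    by_cases hσ : σ = 1
    · subst hσ
      exact ⟨[], by simp, rfl, by simp [← hk, starPotential_one]⟩
    obtain ⟨b, hb, hstep⟩ := exists_leafDefect_mul_swap_add_one a hσ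
    have hcons := starPotential_add_leafDefect_mul_swap σ hb
    obtain ⟨s, hs, hsort, hlen⟩ := ih _ (by omega) (σ * swap a b) rfl
    refine ⟨b :: s, ?_, hsort, ?_⟩
    · simpa [hb] using hs
    · simp only [List.length_cons]
      omega

end Equiv.Perm

/-- Star formula: the minimum number of swaps sorting a token placement on a star
equals `n_U + ℓ`, where `n_U` is the number of unhappy leaves and `ℓ` is the number of
cycles of the token permutation of length ≥ 2 not containing the center. -/
theorem stmt4 (n : ℕ) (π : Equiv.Perm (Fin (n + 1))) :
    IsLeast {m : ℕ | ∃ s : List (Fin (n + 1)), (∀ v ∈ s, v ≠ 0) ∧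
        applyStarSwaps n π s = 1 ∧ s.length = m}
      ((Finset.univ.filter fun v : Fin (n + 1) => v ≠ 0 ∧ π v ≠ v).card +
        (π.cycleFactorsFinset.filter fun c => c 0 = 0).card) := by
  have hunhappy : (Finset.univ.filter fun v : Fin (n + 1) => v ≠ 0 ∧ π v ≠ v) =
      π.support.erase 0 := by
    ext v
    simp
  rw [hunhappy]
  refine ⟨Equiv.Perm.exists_foldl_mul_swap_eq_one 0 π, ?_⟩
  rintro m ⟨s, hs, hsort, rfl⟩
  exact Equiv.Perm.starPotential_le_length hs hsort
end

section
/- In token swapping on the 10-vertex tree consisting of a path v_1,...,v_9 with an extra leaf v_10 attached to v_3, with token 10 initially on v_10 and tokens 9,8,...,1 in that order on v_1,...,v_9 (so token 10−i on v_i for 1≤i≤9), there exists a swap sequence of length 34 sorting all tokens, whereas every swap sequence that never moves the token on vertex v_10 has length at least 36. -/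
set_option maxRecDepth 100000

/-- Apply a list of swaps to a token placement `π` (`π v` = token on vertex `v`). -/
def applySwaps {V : Type*} [DecidableEq V] (π : Equiv.Perm V) (s : List (V × V)) :
    Equiv.Perm V :=
  s.foldl (fun σ e => σ * Equiv.swap e.1 e.2) π

/-- The 10-vertex tree: path `v_1, …, v_9` (indices `0, …, 8`) plus a leaf
`v_10` (index `9`) attached to `v_3` (index `2`). -/
def adj6 : Fin 10 → Fin 10 → Prop := fun u v =>
  ((u : ℕ) + 1 = (v : ℕ) ∧ (v : ℕ) ≤ 8) ∨ ((v : ℕ) + 1 = (u : ℕ) ∧ (u : ℕ) ≤ 8) ∨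
  ((u : ℕ) = 2 ∧ (v : ℕ) = 9) ∨ ((u : ℕ) = 9 ∧ (v : ℕ) = 2)

instance : DecidableRel adj6 := fun u v => by unfold adj6; infer_instance

def invCount (σ : Equiv.Perm (Fin 10)) : ℕ :=
  (Finset.univ.filter (fun p : Fin 10 × Fin 10 => p.1 < p.2 ∧ σ p.2 < σ p.1)).card

lemma swaplt : ∀ a b p q : Fin 10, (a : ℕ) + 1 = (b : ℕ) → p < q → ¬(p = a ∧ q = b) →
    Equiv.swap a b p < Equiv.swap a b q := by decide

lemma key (g : Equiv.Perm (Fin 10)) (a b : Fin 10) (hab : (a : ℕ) + 1 = (b : ℕ)) :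
    invCount (g * Equiv.swap a b) ≤ invCount g + 1 := by
  classical
  set τ := Equiv.swap a b with hτ
  set A : Finset (Fin 10 × Fin 10) :=
    Finset.univ.filter (fun p => p.1 < p.2 ∧ (g * τ) p.2 < (g * τ) p.1) with hA
  set B : Finset (Fin 10 × Fin 10) :=
    Finset.univ.filter (fun p => p.1 < p.2 ∧ g p.2 < g p.1) with hB
  have hsub : A ⊆ insert (a, b) (A.erase (a, b)) := by
    intro x hx
    by_cases h : x = (a, b)
    · simp [h]
    · exact Finset.mem_insert_of_mem (Finset.mem_erase.2 ⟨h, hx⟩)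
  have hcard : A.card ≤ (A.erase (a, b)).card + 1 := by
    calc A.card ≤ (insert (a, b) (A.erase (a, b))).card := Finset.card_le_card hsub
    _ ≤ (A.erase (a, b)).card + 1 := Finset.card_insert_le _ _
  have hinj : ∀ p ∈ A.erase (a, b), ∀ q ∈ A.erase (a, b),
      (τ p.1, τ p.2) = (τ q.1, τ q.2) → p = q := by
    intro p _ q _ h
    have h1 := congrArg Prod.fst h
    have h2 := congrArg Prod.snd h
    simp only at h1 h2
    exact Prod.ext (τ.injective h1) (τ.injective h2)
  have hmaps : ∀ p ∈ A.erase (a, b), (τ p.1, τ p.2) ∈ B := by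
    intro p hp
    rw [Finset.mem_erase] at hp
    obtain ⟨hne, hpA⟩ := hp
    rw [hA, Finset.mem_filter] at hpA
    obtain ⟨-, hlt, hinv⟩ := hpA
    rw [hB, Finset.mem_filter]
    refine ⟨Finset.mem_univ _, ?_, ?_⟩
    · refine swaplt a b p.1 p.2 hab hlt ?_
      rintro ⟨h1, h2⟩
      exact hne (Prod.ext h1 h2)
    · simpa [Equiv.Perm.mul_apply] using hinv
  have hle : (A.erase (a, b)).card ≤ B.card :=
    Finset.card_le_card_of_injOn _ hmaps (fun p hp q hq h => hinj p hp q hq h)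
  calc invCount (g * τ) = A.card := rfl
  _ ≤ (A.erase (a, b)).card + 1 := hcard
  _ ≤ B.card + 1 := by omega

lemma key' (g : Equiv.Perm (Fin 10)) (a b : Fin 10)
    (hab : (a : ℕ) + 1 = (b : ℕ) ∨ (b : ℕ) + 1 = (a : ℕ)) :
    invCount g ≤ invCount (g * Equiv.swap a b) + 1 := by
  rcases hab with h | h
  · have := key (g * Equiv.swap a b) a b h
    have hg : (g * Equiv.swap a b) * Equiv.swap a b = g := by
      rw [mul_assoc, Equiv.swap_mul_self, mul_one]
    rwa [hg] at this
  · have := key (g * Equiv.swap a b) b a h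
    have hg : (g * Equiv.swap a b) * Equiv.swap b a = g := by
      rw [Equiv.swap_comm b a, mul_assoc, Equiv.swap_mul_self, mul_one]
    rwa [hg] at this

lemma lower (s : List (Fin 10 × Fin 10)) :
    ∀ σ : Equiv.Perm (Fin 10),
    (∀ e ∈ s, ((e.1 : ℕ) + 1 = (e.2 : ℕ) ∨ (e.2 : ℕ) + 1 = (e.1 : ℕ))) →
    invCount σ ≤ invCount (applySwaps σ s) + s.length := by
  induction s with
  | nil => intro σ _; simp [applySwaps]
  | cons e t ih =>
      intro σ h
      have h1 : invCount σ ≤ invCount (σ * Equiv.swap e.1 e.2) + 1 :=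
        key' σ e.1 e.2 (h e List.mem_cons_self)
      have h2 := ih (σ * Equiv.swap e.1 e.2) (fun f hf => h f (List.mem_cons_of_mem _ hf))
      have h3 : applySwaps σ (e :: t) = applySwaps (σ * Equiv.swap e.1 e.2) t := rfl
      rw [h3]
      simp only [List.length_cons]
      omega

def π₀ : Equiv.Perm (Fin 10) :=
  Equiv.swap 0 8 * Equiv.swap 1 7 * Equiv.swap 2 6 * Equiv.swap 3 5

/-- Counterexample to the Happy Leaf Conjecture: with token `10` on the happy leaf
`v_10` and tokens `9, 8, …, 1` on `v_1, …, v_9`, there is a sorting swap sequence of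
length `34`, whereas every sorting swap sequence that never moves the token on
vertex `v_10` has length at least `36`.  (Vertices and tokens are `0`-indexed:
token `10 − i` on `v_i` means `π j = 8 − j` for `j ≤ 8`, and `π 9 = 9`.) -/
theorem stmt6 (π : Equiv.Perm (Fin 10))
    (hπ : ∀ i : Fin 10, (π i : ℕ) = if (i : ℕ) = 9 then 9 else 8 - (i : ℕ)) :
    (∃ s : List (Fin 10 × Fin 10), (∀ e ∈ s, adj6 e.1 e.2) ∧
      applySwaps π s = 1 ∧ s.length = 34) ∧
    (∀ s : List (Fin 10 × Fin 10), (∀ e ∈ s, adj6 e.1 e.2) →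
      applySwaps π s = 1 → (∀ e ∈ s, (e.1 : ℕ) ≠ 9 ∧ (e.2 : ℕ) ≠ 9) →
      36 ≤ s.length) := by
  have hπ0 : π = π₀ := by
    apply Equiv.ext
    intro i
    have h := hπ i
    apply Fin.ext
    rw [h]
    fin_cases i <;> decide
  subst hπ0
  constructor
  · refine ⟨[(0,1),(7,8),(2,9),(1,2),(0,1),(2,3),(1,2),(3,4),(2,3),(4,5),(3,4),(5,6),
      (4,5),(6,7),(5,6),(7,8),(6,7),(2,9),(2,3),(1,2),(3,4),(2,3),(4,5),(3,4),(5,6),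
      (4,5),(2,9),(2,3),(1,2),(0,1),(3,4),(2,3),(1,2),(2,9)], ?_, ?_, rfl⟩
    · decide
    · decide
  · intro s hadj hsort h9
    have hedge : ∀ e ∈ s, ((e.1 : ℕ) + 1 = (e.2 : ℕ) ∨ (e.2 : ℕ) + 1 = (e.1 : ℕ)) := by
      intro e he
      have h1 := hadj e he
      have h2 := h9 e he
      rcases h1 with ⟨h, _⟩ | ⟨h, _⟩ | ⟨_, h⟩ | ⟨h, _⟩ <;> omega
    have := lower s π₀ hedge
    rw [hsort] at this
    have h36 : invCount π₀ = 36 := by decide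
    have h0 : invCount 1 = 0 := by decide
    omega
end

section
/- Any swap sequence on a star that at some point swaps the token off a happy leaf uses at least two more swaps than an optimal swap sequence. -/
open Equiv Finset

namespace StarTokenSwapping

variable {α : Type*} [DecidableEq α]

lemma mul_swap_apply_of_ne {c v x : α} {σ : Perm α} (hxc : x ≠ c) (hxv : x ≠ v) :
    (σ * swap c v) x = σ x := by
  rw [Perm.mul_apply, swap_apply_of_ne_of_ne hxc hxv]

variable [Fintype α]

def unhappyLeaves (c : α) (σ : Perm α) : Finset α :=
  univ.filter fun v => v ≠ c ∧ σ v ≠ v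

def cyclesAvoiding (c : α) (σ : Perm α) : Finset (Perm α) :=
  σ.cycleFactorsFinset.filter fun κ => κ c = c

def starPotential (c : α) (σ : Perm α) : ℕ :=
  #(unhappyLeaves c σ) + #(cyclesAvoiding c σ)

variable {c v : α} {σ : Perm α}

lemma erase_unhappyLeaves_mul_swap :
    (unhappyLeaves c (σ * swap c v)).erase v = (unhappyLeaves c σ).erase v := by
  ext x
  simp only [unhappyLeaves, mem_erase, mem_filter, mem_univ, true_and, and_congr_right_iff]
  intro hxv hxc
  rw [mul_swap_apply_of_ne hxc hxv]

lemma mem_unhappyLeaves_mul_swap (hv : v ≠ c) :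
    v ∈ unhappyLeaves c (σ * swap c v) ↔ σ c ≠ v := by
  rw [unhappyLeaves, mem_filter]
  simp [hv]

lemma card_unhappyLeaves_le_mul_swap_add_one :
    #(unhappyLeaves c σ) ≤ #(unhappyLeaves c (σ * swap c v)) + 1 := by
  have := (unhappyLeaves c σ).pred_card_le_card_erase (a := v)
  have := (unhappyLeaves c (σ * swap c v)).card_erase_le (a := v)
  rw [erase_unhappyLeaves_mul_swap] at this
  omega

lemma card_unhappyLeaves_le_mul_swap (hv : v ≠ c) (h : σ c ≠ v) :
    #(unhappyLeaves c σ) ≤ #(unhappyLeaves c (σ * swap c v)) := by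
  have := (unhappyLeaves c σ).pred_card_le_card_erase (a := v)
  rw [← card_erase_add_one ((mem_unhappyLeaves_mul_swap hv).2 h), erase_unhappyLeaves_mul_swap]
  omega

lemma card_unhappyLeaves_add_one_le_mul_swap (hv : v ≠ c) (hfix : σ v = v) :
    #(unhappyLeaves c σ) + 1 ≤ #(unhappyLeaves c (σ * swap c v)) := by
  have hσc : σ c ≠ v := fun h => hv (σ.injective (hfix.trans h.symm))
  have hvU : v ∉ unhappyLeaves c σ := by simp [unhappyLeaves, hfix]
  rw [← card_erase_add_one ((mem_unhappyLeaves_mul_swap hv).2 hσc), erase_unhappyLeaves_mul_swap,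
    erase_eq_of_notMem hvU]

lemma filter_cyclesAvoiding_mul_swap :
    (cyclesAvoiding c (σ * swap c v)).filter (· v = v) = (cyclesAvoiding c σ).filter (· v = v) := by
  ext κ
  simp only [cyclesAvoiding, mem_filter, Perm.mem_cycleFactorsFinset_iff]
  constructor <;> rintro ⟨⟨⟨hκ, hagree⟩, hc⟩, hv⟩ <;> refine ⟨⟨⟨hκ, fun x hx => ?_⟩, hc⟩, hv⟩
  all_goals
    have hxc : x ≠ c := fun h => Perm.mem_support.1 (h ▸ hx) hc
    have hxv : x ≠ v := fun h => Perm.mem_support.1 (h ▸ hx) hv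
  · exact (hagree x hx).trans (mul_swap_apply_of_ne hxc hxv)
  · exact (hagree x hx).trans (mul_swap_apply_of_ne hxc hxv).symm

lemma card_cyclesAvoiding_le_filter_add_one :
    #(cyclesAvoiding c σ) ≤ #((cyclesAvoiding c σ).filter (· v = v)) + 1 := by
  have hmoving : #((cyclesAvoiding c σ).filter fun κ => ¬κ v = v) ≤ 1 := by
    refine card_le_one.2 fun κ₁ h₁ κ₂ h₂ => ?_
    simp only [cyclesAvoiding, mem_filter] at h₁ h₂
    rw [Perm.cycle_is_cycleOf (Perm.mem_support.2 h₁.2) h₁.1.1,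
      Perm.cycle_is_cycleOf (Perm.mem_support.2 h₂.2) h₂.1.1]
  have := (cyclesAvoiding c σ).card_filter_add_card_filter_not (· v = v)
  omega

lemma apply_eq_self_of_mem_cyclesAvoiding {κ : Perm α} (hκ : κ ∈ cyclesAvoiding c σ)
    (hv : v ≠ c) (h : σ c = v ∨ σ v = v) : κ v = v := by
  simp only [cyclesAvoiding, mem_filter] at hκ
  obtain ⟨hκσ, hκc⟩ := hκ
  by_contra hκv
  rcases h with hcv | hfix
  · have hsame : σ.SameCycle v c := (Perm.SameCycle.symm ⟨1, by simpa using hcv⟩)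
    have : κ c = σ c := by
      rw [Perm.cycle_is_cycleOf (Perm.mem_support.2 hκv) hκσ, Perm.cycleOf_apply, if_pos hsame]
    exact hv (hcv ▸ this ▸ hκc)
  · exact hκv (((Perm.mem_cycleFactorsFinset_iff.1 hκσ).2 v (Perm.mem_support.2 hκv)).trans hfix)

lemma card_cyclesAvoiding_le_mul_swap (hv : v ≠ c) (h : σ c = v ∨ σ v = v) :
    #(cyclesAvoiding c σ) ≤ #(cyclesAvoiding c (σ * swap c v)) := by
  rw [← filter_true_of_mem fun κ hκ => apply_eq_self_of_mem_cyclesAvoiding hκ hv h,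
    ← filter_cyclesAvoiding_mul_swap]
  exact card_filter_le _ _

lemma card_cyclesAvoiding_le_mul_swap_add_one :
    #(cyclesAvoiding c σ) ≤ #(cyclesAvoiding c (σ * swap c v)) + 1 := by
  have := card_cyclesAvoiding_le_filter_add_one (c := c) (σ := σ) (v := v)
  rw [← filter_cyclesAvoiding_mul_swap] at this
  exact this.trans (Nat.add_le_add_right (card_filter_le _ _) 1)

theorem starPotential_le_mul_swap_add_one (hv : v ≠ c) :
    starPotential c σ ≤ starPotential c (σ * swap c v) + 1 := by
  unfold starPotential
  by_cases h : σ c = v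
  · have := card_unhappyLeaves_le_mul_swap_add_one (c := c) (σ := σ) (v := v)
    have := card_cyclesAvoiding_le_mul_swap hv (Or.inl h)
    omega
  · have := card_unhappyLeaves_le_mul_swap hv h
    have := card_cyclesAvoiding_le_mul_swap_add_one (c := c) (σ := σ) (v := v)
    omega

theorem starPotential_add_one_le_mul_swap (hv : v ≠ c) (hfix : σ v = v) :
    starPotential c σ + 1 ≤ starPotential c (σ * swap c v) := by
  have := card_unhappyLeaves_add_one_le_mul_swap hv hfix
  have := card_cyclesAvoiding_le_mul_swap hv (Or.inr hfix)
  unfold starPotential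
  omega

@[simp]
lemma starPotential_one : starPotential c (1 : Perm α) = 0 := by
  simp [starPotential, unhappyLeaves, cyclesAvoiding]

end StarTokenSwapping

open StarTokenSwapping

section

variable {n : ℕ} (π : Perm (Fin (n + 1)))

lemma applyStarSwaps_cons (v : Fin (n + 1)) (s : List (Fin (n + 1))) :
    applyStarSwaps n π (v :: s) = applyStarSwaps n (π * swap 0 v) s :=
  rfl

lemma applyStarSwaps_append (s₁ s₂ : List (Fin (n + 1))) :
    applyStarSwaps n π (s₁ ++ s₂) = applyStarSwaps n (applyStarSwaps n π s₁) s₂ :=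
  List.foldl_append

lemma starPotential_le_applyStarSwaps_add_length {s : List (Fin (n + 1))}
    (hleaf : ∀ v ∈ s, v ≠ 0) :
    starPotential 0 π ≤ starPotential 0 (applyStarSwaps n π s) + s.length := by
  induction s generalizing π with
  | nil => simp [applyStarSwaps]
  | cons v s ih =>
    have hstep := starPotential_le_mul_swap_add_one (σ := π) (hleaf v List.mem_cons_self)
    have hrest := ih (π * swap 0 v) fun w hw => hleaf w (List.mem_cons_of_mem _ hw)
    rw [applyStarSwaps_cons, List.length_cons]
    omega

lemma starPotential_le_length {s : List (Fin (n + 1))} (hleaf : ∀ v ∈ s, v ≠ 0)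
    (hsort : applyStarSwaps n π s = 1) : starPotential 0 π ≤ s.length := by
  simpa [hsort] using starPotential_le_applyStarSwaps_add_length π hleaf

end

/-- Any sorting swap sequence on a star that at some point swaps the token off a
happy leaf (a leaf whose current token is its destination) uses at least two more
swaps than an optimal swap sequence, whose length is `n_U + ℓ` by the star formula. -/
theorem stmt9 (n : ℕ) (π : Equiv.Perm (Fin (n + 1)))
    (s : List (Fin (n + 1))) (hleaf : ∀ v ∈ s, v ≠ 0)
    (hsort : applyStarSwaps n π s = 1)
    (t : ℕ) (ht : t < s.length)
    (hhappy : applyStarSwaps n π (s.take t) (s.get ⟨t, ht⟩) = s.get ⟨t, ht⟩) :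
    ((Finset.univ.filter fun v : Fin (n + 1) => v ≠ 0 ∧ π v ≠ v).card +
        (π.cycleFactorsFinset.filter fun c => c 0 = 0).card) + 2 ≤ s.length := by
  change starPotential 0 π + 2 ≤ s.length
  set σ := applyStarSwaps n π (s.take t)
  replace hhappy : σ s[t] = s[t] := hhappy
  have hrest : applyStarSwaps n (σ * swap 0 s[t]) (s.drop (t + 1)) = 1 := by
    rw [← applyStarSwaps_cons, ← List.drop_eq_getElem_cons ht, ← applyStarSwaps_append,
      List.take_append_drop, hsort]
  have hbefore : starPotential 0 π ≤ starPotential 0 σ + t := by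
    simpa [ht.le] using starPotential_le_applyStarSwaps_add_length π (s := s.take t)
      fun w hw => hleaf w (List.mem_of_mem_take hw)
  have hswap := starPotential_add_one_le_mul_swap (hleaf _ (List.getElem_mem ht)) hhappy
  have hafter := starPotential_le_length _ (fun w hw => hleaf w (List.mem_of_mem_drop hw)) hrest
  rw [List.length_drop] at hafter
  omega
end

section
/- An optimal swap sequence never swaps the same pair of tokens twice: if a sorting swap sequence contains two swaps exchanging the same two tokens a and b, then there is a strictly shorter swap sequence achieving the same sorting. -/
theorem List.eq_take_append_getElem_cons_drop {α : Type*} (l : List α) {i : ℕ}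
    (h : i < l.length) : l = l.take i ++ l[i] :: l.drop (i + 1) := by
  rw [List.getElem_cons_drop, List.take_append_drop]

section TokenSwapping

variable {V : Type*} [DecidableEq V]

theorem applySwaps_append (π : Equiv.Perm V) (l₁ l₂ : List (V × V)) :
    applySwaps π (l₁ ++ l₂) = applySwaps (applySwaps π l₁) l₂ :=
  List.foldl_append ..

theorem applySwaps_cons (π : Equiv.Perm V) (e : V × V) (l : List (V × V)) :
    applySwaps π (e :: l) = applySwaps (π * Equiv.swap e.1 e.2) l := rfl

theorem applySwaps_mul_left (τ π : Equiv.Perm V) (l : List (V × V)) :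
    applySwaps (τ * π) l = τ * applySwaps π l := by
  induction l generalizing π with
  | nil => rfl
  | cons e l ih => rw [applySwaps_cons, applySwaps_cons, mul_assoc, ih]

theorem mul_swap_eq_swap_mul_of_tokens {σ : Equiv.Perm V} {e : V × V} {a b : V}
    (h : (σ e.1 = a ∧ σ e.2 = b) ∨ (σ e.1 = b ∧ σ e.2 = a)) :
    σ * Equiv.swap e.1 e.2 = Equiv.swap a b * σ := by
  rw [Equiv.mul_swap_eq_swap_mul]
  rcases h with ⟨h₁, h₂⟩ | ⟨h₁, h₂⟩
  · rw [h₁, h₂]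
  · rw [h₁, h₂, Equiv.swap_comm]

theorem applySwaps_eq_of_swap_tokens_twice (π : Equiv.Perm V) (A B C : List (V × V))
    (p q : V × V) (a b : V)
    (hp : (applySwaps π A p.1 = a ∧ applySwaps π A p.2 = b) ∨
      (applySwaps π A p.1 = b ∧ applySwaps π A p.2 = a))
    (hq : (applySwaps π (A ++ p :: B) q.1 = a ∧ applySwaps π (A ++ p :: B) q.2 = b) ∨
      (applySwaps π (A ++ p :: B) q.1 = b ∧ applySwaps π (A ++ p :: B) q.2 = a)) :
    applySwaps π (A ++ p :: B ++ q :: C) = applySwaps π (A ++ B ++ C) := by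
  have h_before_q : applySwaps π (A ++ p :: B) =
      Equiv.swap a b * applySwaps π (A ++ B) := by
    rw [applySwaps_append, applySwaps_cons, mul_swap_eq_swap_mul_of_tokens hp,
      applySwaps_mul_left, applySwaps_append]
  rw [applySwaps_append, applySwaps_cons, mul_swap_eq_swap_mul_of_tokens hq, h_before_q,
    ← mul_assoc, Equiv.swap_mul_self, one_mul, ← applySwaps_append]

end TokenSwapping

/-- An optimal swap sequence never swaps the same pair of tokens twice: if a sorting
swap sequence contains two swaps (at positions `i < j`) both exchanging the same two
tokens `a` and `b`, then there is a strictly shorter sorting swap sequence. -/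
theorem stmt17 {V : Type*} [DecidableEq V] (G : SimpleGraph V) (π : Equiv.Perm V)
    (s : List (V × V)) (hval : ∀ e ∈ s, G.Adj e.1 e.2)
    (hsort : applySwaps π s = 1)
    (i j : ℕ) (hij : i < j) (hj : j < s.length) (a b : V)
    (hi : ((applySwaps π (s.take i)) (s.get ⟨i, hij.trans hj⟩).1 = a ∧
            (applySwaps π (s.take i)) (s.get ⟨i, hij.trans hj⟩).2 = b) ∨
          ((applySwaps π (s.take i)) (s.get ⟨i, hij.trans hj⟩).1 = b ∧
            (applySwaps π (s.take i)) (s.get ⟨i, hij.trans hj⟩).2 = a))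
    (hjj : ((applySwaps π (s.take j)) (s.get ⟨j, hj⟩).1 = a ∧
            (applySwaps π (s.take j)) (s.get ⟨j, hj⟩).2 = b) ∨
          ((applySwaps π (s.take j)) (s.get ⟨j, hj⟩).1 = b ∧
            (applySwaps π (s.take j)) (s.get ⟨j, hj⟩).2 = a)) :
    ∃ s' : List (V × V), (∀ e ∈ s', G.Adj e.1 e.2) ∧ applySwaps π s' = 1 ∧
      s'.length < s.length := by
  set A := s.take i
  set B := (s.take j).drop (i + 1)
  set C := s.drop (j + 1)
  have h_take_j : s.take j = A ++ s[i] :: B := by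
    have hi' : i < (s.take j).length := by simp [hij, hj.le]
    simpa [List.take_take, hij.le] using (s.take j).eq_take_append_getElem_cons_drop hi'
  have hs : s = A ++ s[i] :: B ++ s[j] :: C := by
    rw [← h_take_j]
    exact s.eq_take_append_getElem_cons_drop hj
  rw [h_take_j] at hjj
  have h_skip := applySwaps_eq_of_swap_tokens_twice π A B C _ _ a b hi hjj
  refine ⟨A ++ B ++ C, fun e he => hval e ?_, ?_, ?_⟩
  · rw [hs]
    simp only [List.mem_append, List.mem_cons] at he ⊢
    tauto
  · rw [← h_skip, List.get_eq_getElem, List.get_eq_getElem, ← hs, hsort]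
  · rw [hs]
    simp
end
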